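/- arXiv:2102.08552 — 3 statements merged into one kernel-verified Lean document; each statement's English description precedes it below -/
import Mathlib

section
/- Suppose (Σ⁺, σ) is a topologically mixing one-sided countable Markov shift with property (BIP), f : Σ⁺ → ℝ is locally Hölder continuous, and d(f) is finite. Then for every b > d(f) there exists D > 0 such that for all t > 0: (1) #{a ∈ 𝒜 : I(f,a) ≤ t} ≤ D e^{bt}, and (2) for every x ∈ Σ⁺, #{y ∈ Σ⁺ : σ(y) = x and f(y) ≤ t} ≤ D e^{bt}. -/
open scoped ENNReal NNReal
open Filter MeasureTheory Set

namespace CMS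

variable {A : Type*}

/-- The one-sided countable Markov shift space determined by transition matrix `T`. -/
def SigmaPlus (T : A → A → Prop) : Set (ℕ → A) :=
  {x | ∀ i, T (x i) (x (i + 1))}

/-- The shift map on `SigmaPlus T`. -/
def shift (T : A → A → Prop) (x : SigmaPlus T) : SigmaPlus T :=
  ⟨fun i => x.1 (i + 1), fun i => x.2 (i + 1)⟩

/-- Topological mixing. -/
def TopMixing (T : A → A → Prop) : Prop :=
  ∀ a b : A, ∃ N : ℕ, ∀ n ≥ N, ∃ x : SigmaPlus T, x.1 0 = a ∧ x.1 n = b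

/-- The big images and preimages property. -/
def BIP (T : A → A → Prop) : Prop :=
  ∃ B : Finset A, ∀ a : A, ∃ b₀ ∈ B, ∃ b₁ ∈ B, T b₀ a ∧ T a b₁

/-- Locally Hölder continuous. -/
def LocHolder (T : A → A → Prop) (f : SigmaPlus T → ℝ) : Prop :=
  ∃ C > (0 : ℝ), ∃ α > (0 : ℝ), ∀ n : ℕ, 1 ≤ n → ∀ x y : SigmaPlus T,
    (∀ i < n, x.1 i = y.1 i) → |f x - f y| ≤ C * Real.exp (-α * n)

/-- Birkhoff (ergodic) sum `S_n f`. -/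
noncomputable def birkhoff (T : A → A → Prop) (f : SigmaPlus T → ℝ) (n : ℕ)
    (x : SigmaPlus T) : ℝ :=
  ∑ i ∈ Finset.range n, f ((shift T)^[i] x)

/-- Points of period `n`: `Fix^n`. -/
def Mfix (T : A → A → Prop) (n : ℕ) : Set (SigmaPlus T) :=
  {x | (shift T)^[n] x = x}

/-- `S(f,a)`, the sup of `f` on the cylinder of the letter `a`. -/
noncomputable def Ssup (T : A → A → Prop) (f : SigmaPlus T → ℝ) (a : A) : ℝ :=
  sSup (f '' {x : SigmaPlus T | x.1 0 = a})

/-- `I(f,a)`, the inf of `f` on the cylinder of the letter `a`. -/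
noncomputable def Iinf (T : A → A → Prop) (f : SigmaPlus T → ℝ) (a : A) : ℝ :=
  sInf (f '' {x : SigmaPlus T | x.1 0 = a})

/-- The set of `s > 0` where `Z₁(f,s) = Σ_a e^{-s S(f,a)}` converges. -/
def convSet (T : A → A → Prop) (f : SigmaPlus T → ℝ) : Set ℝ :=
  {s | 0 < s ∧ Summable fun a : A => Real.exp (-s * Ssup T f a)}

/-- The critical exponent `d(f)` of `Z₁(f,·)`. -/
noncomputable def dcrit (T : A → A → Prop) (f : SigmaPlus T → ℝ) : ℝ :=
  sInf (convSet T f)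

/-- Eventually positive. -/
def EvPositive (T : A → A → Prop) (f : SigmaPlus T → ℝ) : Prop :=
  ∃ N : ℕ, ∃ B > (0 : ℝ), ∀ n ≥ N, ∀ x : SigmaPlus T, B < birkhoff T f n x

/-- Strictly positive: `inf f > 0`. -/
def StrictPositive (T : A → A → Prop) (f : SigmaPlus T → ℝ) : Prop :=
  ∃ c > (0 : ℝ), ∀ x : SigmaPlus T, c ≤ f x

/-- Non-arithmetic: the subgroup of `ℝ` generated by the periods is not cyclic. -/
def NonArithmetic (T : A → A → Prop) (f : SigmaPlus T → ℝ) : Prop :=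
  ¬ ∃ c : ℝ, ∀ n : ℕ, 1 ≤ n → ∀ x ∈ Mfix T n, ∃ m : ℤ, birkhoff T f n x = m * c

/-- Extended logarithm `ℝ≥0∞ → EReal`. -/
noncomputable def elog (x : ℝ≥0∞) : EReal :=
  if x = 0 then ⊥ else if x = ⊤ then ⊤ else ((Real.log x.toReal : ℝ) : EReal)

/-- The Gurevich partition sum `Z_n(f,a)` valued in `ℝ≥0∞`. -/
noncomputable def Zpart (T : A → A → Prop) (f : SigmaPlus T → ℝ) (a : A) (n : ℕ) : ℝ≥0∞ :=
  ∑' x : {x : SigmaPlus T // x ∈ Mfix T n ∧ x.1 0 = a},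
    ENNReal.ofReal (Real.exp (birkhoff T f n x))

/-- `p` is the Gurevich pressure of `f`. -/
def HasGurevichPressure (T : A → A → Prop) (f : SigmaPlus T → ℝ) (p : EReal) : Prop :=
  ∀ a : A, Tendsto (fun n : ℕ => (((n : ℝ)⁻¹ : ℝ) : EReal) * elog (Zpart T f a n))
    atTop (nhds p)

/-- `ℳ_f(n,t)`. -/
def Mset (T : A → A → Prop) (f : SigmaPlus T → ℝ) (n : ℕ) (t : ℝ) : Set (SigmaPlus T) :=
  {x | x ∈ Mfix T n ∧ birkhoff T f n x ≤ t}

/-- `M_f(t) = Σ_{n≥1} (1/n) #ℳ_f(n,t)`, valued in `[0,∞]`. -/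
noncomputable def Mcount (T : A → A → Prop) (f : SigmaPlus T → ℝ) (t : ℝ) : ℝ≥0∞ :=
  ∑' n : ℕ, ((n : ℝ≥0∞) + 1)⁻¹ * ((Mset T f (n + 1) t).encard : ℝ≥0∞)

/-- `ℛ_f(k,t)`. -/
def Rset (T : A → A → Prop) (f : SigmaPlus T → ℝ) (k : ℕ) (t : ℝ) : Set (SigmaPlus T) :=
  {x | x ∈ Mset T f k t ∧ ∀ n : ℕ, 1 ≤ n → n < k → x ∉ Mset T f n t}

/-- `R_f(t) = Σ_{k≥1} (1/k) #ℛ_f(k,t)`, valued in `[0,∞]`. -/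
noncomputable def Rcount (T : A → A → Prop) (f : SigmaPlus T → ℝ) (t : ℝ) : ℝ≥0∞ :=
  ∑' k : ℕ, ((k : ℝ≥0∞) + 1)⁻¹ * ((Rset T f (k + 1) t).encard : ℝ≥0∞)

/-- The cylinder determined by a word `w` of length `k`. -/
def cylinder (T : A → A → Prop) {k : ℕ} (w : Fin k → A) : Set (SigmaPlus T) :=
  {x | ∀ i : Fin k, x.1 i = w i}

/-- A σ-invariant Gibbs state for `f` (normalized so that `P(f) = 0`). -/
def GibbsState [MeasurableSpace A] (T : A → A → Prop) (f : SigmaPlus T → ℝ)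
    (μ : Measure (SigmaPlus T)) : Prop :=
  IsProbabilityMeasure μ ∧ MeasurePreserving (shift T) μ μ ∧
    ∃ B > (1 : ℝ), ∀ (n : ℕ), 1 ≤ n → ∀ (w : Fin n → A), ∀ x ∈ cylinder T w,
      1 / B ≤ (μ (cylinder T w)).toReal / Real.exp (birkhoff T f n x) ∧
        (μ (cylinder T w)).toReal / Real.exp (birkhoff T f n x) ≤ B

/-- The transfer (Ruelle–Perron–Frobenius) operator. -/
noncomputable def transfer (T : A → A → Prop) (g φ : SigmaPlus T → ℝ)
    (x : SigmaPlus T) : ℝ :=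
  ∑' y : {y : SigmaPlus T // shift T y = x}, Real.exp (g y) * φ y

/-- The renewal function `N_f(φ,x,t)`, valued in `[0,∞]`. -/
noncomputable def renewal (T : A → A → Prop) (f φ : SigmaPlus T → ℝ)
    (x : SigmaPlus T) (t : ℝ) : ℝ≥0∞ :=
  ∑' n : ℕ, ∑' y : {y : SigmaPlus T // (shift T)^[n] y = x},
    ENNReal.ofReal (if birkhoff T f n y ≤ t then φ y else 0)

/- Locally Hölder potentials vary by at most a constant `V` on each one-letter cylinder,
so `S(f,a) ≤ I(f,a) + V`. Every letter with `I(f,a) ≤ t` therefore contributes at least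
`e^{-s(t+V)}` to the convergent series `Z₁(f,s)` for any `d(f) < s < b`, which bounds their number by
`Z₁(f,s) e^{sV} e^{st}`. The preimages of a point are determined by their first letter `a`,
and `f(y) ≤ t` forces `I(f,a) ≤ t`. -/

lemma _root_.Set.encard_setOf_le_le_ofReal_tsum_div {ι : Type*} {g : ι → ℝ} (hg : Summable g)
    (hg0 : ∀ i, 0 ≤ g i) {ε : ℝ} (hε : 0 < ε) :
    ({i | ε ≤ g i}.encard : ℝ≥0∞) ≤ ENNReal.ofReal ((∑' i, g i) / ε) := by
  rw [ENNReal.ofReal_div_of_pos hε, ENNReal.ofReal_tsum_of_nonneg hg0 hg,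
    ENNReal.le_div_iff_mul_le (by simp [hε]) (by simp)]
  calc ({i | ε ≤ g i}.encard : ℝ≥0∞) * ENNReal.ofReal ε
      = ∑' _ : {i | ε ≤ g i}, ENNReal.ofReal ε := (ENNReal.tsum_set_const _ _).symm
    _ ≤ ∑' i : {i | ε ≤ g i}, ENNReal.ofReal (g i) :=
        ENNReal.tsum_le_tsum fun i => ENNReal.ofReal_le_ofReal i.2
    _ ≤ ∑' i, ENNReal.ofReal (g i) :=
        ENNReal.tsum_comp_le_tsum_of_injective Subtype.val_injective _

lemma _root_.Real.sSup_le_sInf_add {S : Set ℝ} {V : ℝ} (hV : 0 ≤ V)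
    (hS : ∀ u ∈ S, ∀ v ∈ S, u - v ≤ V) : sSup S ≤ sInf S + V := by
  rcases S.eq_empty_or_nonempty with rfl | hne
  · simpa using hV
  rw [← sub_le_iff_le_add]
  refine le_csInf hne fun v hv => sub_le_iff_le_add.2 (csSup_le hne fun u hu => ?_)
  linarith [hS u hu v hv]

variable {T : A → A → Prop} {f : SigmaPlus T → ℝ} {V : ℝ}

lemma LocHolder.exists_abs_sub_le_of_head_eq (hf : LocHolder T f) :
    ∃ V, 0 ≤ V ∧ ∀ x y : SigmaPlus T, x.1 0 = y.1 0 → |f x - f y| ≤ V := by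
  obtain ⟨C, hC, α, -, hf⟩ := hf
  refine ⟨C * Real.exp (-α * 1), by positivity, fun x y hxy => ?_⟩
  exact_mod_cast hf 1 le_rfl x y fun i hi => by rwa [Nat.lt_one_iff.1 hi]

lemma eq_of_shift_eq_of_head_eq {y y' : SigmaPlus T} (hshift : shift T y = shift T y')
    (hhead : y.1 0 = y'.1 0) : y = y' := by
  ext1
  funext i
  cases i with
  | zero => exact hhead
  | succ n => exact congrArg (fun z : SigmaPlus T => z.1 n) hshift

lemma Ssup_le_Iinf_add (hV : ∀ x y : SigmaPlus T, x.1 0 = y.1 0 → |f x - f y| ≤ V)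
    (hV0 : 0 ≤ V) (a : A) : Ssup T f a ≤ Iinf T f a + V := by
  refine Real.sSup_le_sInf_add hV0 ?_
  rintro _ ⟨x, hx, rfl⟩ _ ⟨y, hy, rfl⟩
  exact (le_abs_self _).trans (hV x y (hx.trans hy.symm))

lemma Iinf_head_le (hV : ∀ x y : SigmaPlus T, x.1 0 = y.1 0 → |f x - f y| ≤ V)
    (y : SigmaPlus T) : Iinf T f (y.1 0) ≤ f y := by
  refine csInf_le ⟨f y - V, ?_⟩ ⟨y, rfl, rfl⟩
  rintro _ ⟨x, hx, rfl⟩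
  linarith [(abs_le.1 (hV x y hx)).1]

lemma encard_setOf_Iinf_le (hV : ∀ x y : SigmaPlus T, x.1 0 = y.1 0 → |f x - f y| ≤ V)
    (hV0 : 0 ≤ V) {s : ℝ} (hs : s ∈ convSet T f) (t : ℝ) :
    ({a : A | Iinf T f a ≤ t}.encard : ℝ≥0∞) ≤
      ENNReal.ofReal ((∑' a, Real.exp (-s * Ssup T f a)) * Real.exp (s * (t + V))) := by
  obtain ⟨hs_pos, hsum⟩ := hs
  have hsub : {a : A | Iinf T f a ≤ t} ⊆
      {a | Real.exp (-s * (t + V)) ≤ Real.exp (-s * Ssup T f a)} := by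
    intro a ha
    have := Ssup_le_Iinf_add hV hV0 a
    simp only [Set.mem_ofPred_eq, Real.exp_le_exp] at ha ⊢
    nlinarith
  calc ({a : A | Iinf T f a ≤ t}.encard : ℝ≥0∞)
      ≤ ({a | Real.exp (-s * (t + V)) ≤ Real.exp (-s * Ssup T f a)}.encard : ℝ≥0∞) := by
        exact_mod_cast Set.encard_mono hsub
    _ ≤ _ := Set.encard_setOf_le_le_ofReal_tsum_div hsum (fun _ => (Real.exp_pos _).le)
          (Real.exp_pos _)
    _ = _ := by rw [div_eq_mul_inv, ← Real.exp_neg, neg_mul, neg_neg]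

lemma encard_preimage_le_encard_setOf_Iinf_le
    (hV : ∀ x y : SigmaPlus T, x.1 0 = y.1 0 → |f x - f y| ≤ V) (x : SigmaPlus T) (t : ℝ) :
    {y : SigmaPlus T | shift T y = x ∧ f y ≤ t}.encard ≤
      {a : A | Iinf T f a ≤ t}.encard := by
  have hinj : Set.InjOn (fun y : SigmaPlus T => y.1 0) {y | shift T y = x ∧ f y ≤ t} :=
    fun y hy y' hy' hhead => eq_of_shift_eq_of_head_eq (hy.1.trans hy'.1.symm) hhead
  rw [← hinj.encard_image]
  refine Set.encard_mono ?_
  rintro _ ⟨y, ⟨-, hyt⟩, rfl⟩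
  exact (Iinf_head_le hV y).trans hyt

theorem growth_of_alphabet_general
    {A : Type*} (T : A → A → Prop)
    (f : SigmaPlus T → ℝ)
    (hhold : LocHolder T f)
    (hfin : (convSet T f).Nonempty) :
    ∀ b : ℝ, dcrit T f < b →
      ∃ D > (0 : ℝ), ∀ t > (0 : ℝ),
        (({a : A | Iinf T f a ≤ t}.encard : ℝ≥0∞) ≤
            ENNReal.ofReal (D * Real.exp (b * t))) ∧
        ∀ x : SigmaPlus T,
          (({y : SigmaPlus T | shift T y = x ∧ f y ≤ t}.encard : ℝ≥0∞) ≤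
            ENNReal.ofReal (D * Real.exp (b * t))) := by
  intro b hb
  obtain ⟨V, hV0, hV⟩ := hhold.exists_abs_sub_le_of_head_eq
  obtain ⟨s, hs, hsb⟩ := exists_lt_of_csInf_lt hfin hb
  set Z := ∑' a, Real.exp (-s * Ssup T f a)
  have hZ : 0 ≤ Z := tsum_nonneg fun _ => (Real.exp_pos _).le
  refine ⟨(Z + 1) * Real.exp (s * V), by positivity, fun t ht => ?_⟩
  have hletters : ({a : A | Iinf T f a ≤ t}.encard : ℝ≥0∞) ≤
      ENNReal.ofReal ((Z + 1) * Real.exp (s * V) * Real.exp (b * t)) := by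
    refine (encard_setOf_Iinf_le hV hV0 hs t).trans (ENNReal.ofReal_le_ofReal ?_)
    calc Z * Real.exp (s * (t + V)) = Z * Real.exp (s * V) * Real.exp (s * t) := by
          rw [mul_add, Real.exp_add]; ring
      _ ≤ (Z + 1) * Real.exp (s * V) * Real.exp (b * t) := by
          gcongr
          linarith
  exact ⟨hletters, fun x => le_trans (by exact_mod_cast
    encard_preimage_le_encard_setOf_Iinf_le hV x t) hletters⟩

/-- Growth of the alphabet: for every `b > d(f)` there is `D > 0` with
`#{a : I(f,a) ≤ t} ≤ D e^{bt}` and `#{y ∈ σ⁻¹(x) : f(y) ≤ t} ≤ D e^{bt}`. -/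
theorem growth_of_alphabet
    {A : Type*} [Countable A] (T : A → A → Prop)
    (f : SigmaPlus T → ℝ)
    (hmix : TopMixing T) (hbip : BIP T)
    (hhold : LocHolder T f)
    (hfin : (convSet T f).Nonempty) :
    ∀ b : ℝ, dcrit T f < b →
      ∃ D > (0 : ℝ), ∀ t > (0 : ℝ),
        (({a : A | Iinf T f a ≤ t}.encard : ℝ≥0∞) ≤
            ENNReal.ofReal (D * Real.exp (b * t))) ∧
        ∀ x : SigmaPlus T,
          (({y : SigmaPlus T | shift T y = x ∧ f y ≤ t}.encard : ℝ≥0∞) ≤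
            ENNReal.ofReal (D * Real.exp (b * t))) :=
  growth_of_alphabet_general T f hhold hfin

end CMS
end

section
/- Suppose (Σ⁺, σ) is a topologically mixing one-sided countable Markov shift with property (BIP), f : Σ⁺ → ℝ is eventually positive and locally Hölder continuous, and d(f) is finite. Then there exist a strictly positive, locally Hölder continuous function g : Σ⁺ → ℝ and a constant C > 0 such that |f(x) − g(x)| ≤ C for all x ∈ Σ⁺ and S_r f(x) = S_r g(x) for every r ∈ ℕ and every x ∈ Fix^r (so f and g are cohomologous); in particular d(f) = d(g). -/
open scoped ENNReal NNReal
open Filter MeasureTheory Set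

namespace CMS

variable {A : Type*}

-- AUX (already verified)
lemma shift_iter (T : A → A → Prop) (x : SigmaPlus T) (i k : ℕ) :
    ((shift T)^[i] x).1 k = x.1 (k + i) := by
  induction i generalizing x with
  | zero => rfl
  | succ i ih =>
    rw [Function.iterate_succ_apply, ih]
    congr 1 <;> omega

lemma birkhoff_shift (T : A → A → Prop) (f : SigmaPlus T → ℝ) (j : ℕ) (x : SigmaPlus T) :
    birkhoff T f j (shift T x) = birkhoff T f (j + 1) x - f x := by
  have : birkhoff T f (j+1) x = (∑ i ∈ Finset.range j, f ((shift T)^[i+1] x)) + f x := by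
    simpa [birkhoff] using Finset.sum_range_succ' (fun i => f ((shift T)^[i] x)) j
  rw [this]
  simp [birkhoff, Function.iterate_succ_apply]

lemma birkhoff_cocycle (T : A → A → Prop) (f : SigmaPlus T → ℝ) (u : SigmaPlus T → ℝ)
    (r : ℕ) (x : SigmaPlus T) :
    birkhoff T (fun y => f y + u y - u (shift T y)) r x
      = birkhoff T f r x + u x - u ((shift T)^[r] x) := by
  have htel : ∑ i ∈ Finset.range r,
      (u ((shift T)^[i] x) - u ((shift T)^[i+1] x))
      = u ((shift T)^[0] x) - u ((shift T)^[r] x) :=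
    Finset.sum_range_sub' (fun i => u ((shift T)^[i] x)) r
  have h1 : (∑ i ∈ Finset.range r, (fun y => f y + u y - u (shift T y)) ((shift T)^[i] x))
      = (∑ i ∈ Finset.range r, f ((shift T)^[i] x))
        + ∑ i ∈ Finset.range r, (u ((shift T)^[i] x) - u ((shift T)^[i+1] x)) := by
    rw [← Finset.sum_add_distrib]
    refine Finset.sum_congr rfl fun i _ => ?_
    show f ((shift T)^[i] x) + u ((shift T)^[i] x) - u (shift T ((shift T)^[i] x)) = _
    rw [← Function.iterate_succ_apply' (shift T) i x]
    ring
  simp only [birkhoff] at *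
  rw [h1, htel]
  simp only [Function.iterate_zero_apply]
  ring

lemma abs_sup'_sub_sup'_le {β : Type*} {s : Finset β} (hs : s.Nonempty) (F G : β → ℝ) (D : ℝ)
    (h : ∀ j ∈ s, |F j - G j| ≤ D) : |s.sup' hs F - s.sup' hs G| ≤ D := by
  rw [abs_le]
  constructor
  · have : s.sup' hs G ≤ s.sup' hs F + D := Finset.sup'_le _ _ fun j hj => by
      have h1 := abs_le.mp (h j hj)
      have h2 := Finset.le_sup' F hj
      linarith [h1.1, h2]
    linarith
  · have : s.sup' hs F ≤ s.sup' hs G + D := Finset.sup'_le _ _ fun j hj => by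
      have h1 := abs_le.mp (h j hj)
      have h2 := Finset.le_sup' G hj
      linarith [h1.2, h2]
    linarith

lemma bddAbove_image_cyl {T : A → A → Prop} {f : SigmaPlus T → ℝ}
    (hf : LocHolder T f) (a : A) :
    BddAbove (f '' {x : SigmaPlus T | x.1 0 = a}) := by
  obtain ⟨C, hC, α, hα, h⟩ := hf
  rcases Set.eq_empty_or_nonempty {x : SigmaPlus T | x.1 0 = a} with he | ⟨x₀, hx₀⟩
  · simp [he]
  · refine ⟨f x₀ + C * Real.exp (-α * 1), ?_⟩
    rintro v ⟨y, hy, rfl⟩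
    have h1 := h 1 le_rfl x₀ y (by
      intro i hi
      interval_cases i
      rw [show (x₀.1 0 = a) from hx₀, show (y.1 0 = a) from hy])
    have h2 := abs_le.mp h1
    push_cast at h2
    linarith [h2.1]

lemma Ssup_le_add {T : A → A → Prop} {f g : SigmaPlus T → ℝ}
    (hf : LocHolder T f) {C : ℝ} (hC : 0 ≤ C)
    (h : ∀ x, g x ≤ f x + C) (a : A) : Ssup T g a ≤ Ssup T f a + C := by
  rcases Set.eq_empty_or_nonempty {x : SigmaPlus T | x.1 0 = a} with he | ⟨x₀, hx₀⟩
  · simp [Ssup, he]; linarith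
  · apply csSup_le (Set.Nonempty.image g ⟨x₀, hx₀⟩)
    rintro v ⟨y, hy, rfl⟩
    have h1 : f y ≤ Ssup T f a := le_csSup (bddAbove_image_cyl hf a) ⟨y, hy, rfl⟩
    linarith [h y]


set_option maxHeartbeats 1000000 in
/-- Every eventually positive, locally Hölder potential with finite critical
exponent is cohomologous to a strictly positive, locally Hölder one, at bounded
distance and with the same periods; in particular `d(f) = d(g)`. -/
theorem eventually_positive_cohomologous_strictly_positive
    {A : Type*} [Countable A] (T : A → A → Prop)
    (f : SigmaPlus T → ℝ)
    (hmix : TopMixing T) (hbip : BIP T)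
    (hev : EvPositive T f)
    (hhold : LocHolder T f)
    (hfin : (convSet T f).Nonempty) :
    ∃ (g : SigmaPlus T → ℝ) (C : ℝ), 0 < C ∧
      LocHolder T g ∧ StrictPositive T g ∧
      (∀ x : SigmaPlus T, |f x - g x| ≤ C) ∧
      (∀ r : ℕ, 1 ≤ r → ∀ x ∈ Mfix T r, birkhoff T f r x = birkhoff T g r x) ∧
      dcrit T f = dcrit T g := by
  classical
  obtain ⟨C₀, hC₀, α, hα, hH⟩ := id hhold
  obtain ⟨N₀, B, hB, hev'⟩ := hev
  obtain ⟨s, hs, hsum⟩ := hfin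
  obtain ⟨N, hNdef⟩ : ∃ N : ℕ, N = max N₀ 1 := ⟨_, rfl⟩
  have hN1 : 1 ≤ N := hNdef ▸ le_max_right _ _
  have hNpos : (0:ℝ) < N := by exact_mod_cast Nat.lt_of_lt_of_le Nat.zero_lt_one hN1
  have hevN : ∀ x : SigmaPlus T, B < birkhoff T f N x := fun x =>
    hev' N (hNdef ▸ le_max_left _ _) x
  -- a uniform lower bound for f
  obtain ⟨m, hm0, hm⟩ : ∃ m ≤ (0:ℝ), ∀ x : SigmaPlus T, m ≤ f x := by
    set V : ℝ := C₀ * Real.exp (-α * 1) with hVdef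
    have hV : 0 < V := by positivity
    set Z : ℝ := ∑' a : A, Real.exp (-s * Ssup T f a) with hZdef
    refine ⟨min (-(Real.log Z) / s - V) 0, min_le_right _ _, fun x => ?_⟩
    refine le_trans (min_le_left _ _) ?_
    have hxmem : x ∈ {y : SigmaPlus T | y.1 0 = x.1 0} := rfl
    have hSle : Ssup T f (x.1 0) ≤ f x + V := by
      apply csSup_le (Set.Nonempty.image f ⟨x, hxmem⟩)
      rintro v ⟨y, hy, rfl⟩
      have h1 := hH 1 le_rfl x y (by
        intro i hi
        interval_cases i
        exact (show y.1 0 = x.1 0 from hy).symm)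
      have h2 := abs_le.mp h1
      push_cast at h2
      linarith [h2.1]
    have hterm : Real.exp (-s * Ssup T f (x.1 0)) ≤ Z :=
      Summable.le_tsum hsum (x.1 0) (fun b _ => (Real.exp_pos _).le)
    have hZpos : 0 < Z := lt_of_lt_of_le (Real.exp_pos _) hterm
    have hlog : -s * Ssup T f (x.1 0) ≤ Real.log Z := (Real.le_log_iff_exp_le hZpos).mpr hterm
    have hS_lb : -(Real.log Z) / s ≤ Ssup T f (x.1 0) := by
      rw [div_le_iff₀ hs]
      nlinarith
    linarith
  obtain ⟨c, hcdef⟩ : ∃ c : ℝ, c = B / (2 * N) := ⟨_, rfl⟩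
  have hc : 0 < c := by rw [hcdef]; positivity
  have hne : (Finset.range N).Nonempty := Finset.nonempty_range_iff.mpr (by omega)
  obtain ⟨u, hu⟩ : ∃ u : SigmaPlus T → ℝ,
      u = fun x => (Finset.range N).sup' hne (fun j : ℕ => c * (j:ℝ) - birkhoff T f j x) :=
    ⟨_, rfl⟩
  have hu0 : ∀ x, 0 ≤ u x := by
    intro x
    have h0 : (0:ℕ) ∈ Finset.range N := Finset.mem_range.mpr (by omega)
    have := Finset.le_sup' (fun j : ℕ => c * (j:ℝ) - birkhoff T f j x) h0
    rw [hu]; exact le_trans (by simp [birkhoff]) this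
  have hSj_lb : ∀ (j : ℕ) (x : SigmaPlus T), (j:ℝ) * m ≤ birkhoff T f j x := by
    intro j x
    calc (j:ℝ) * m = ∑ _i ∈ Finset.range j, m := by
          simp [Finset.sum_const, nsmul_eq_mul]
      _ ≤ _ := Finset.sum_le_sum fun i _ => hm _
  obtain ⟨K, hKdef⟩ : ∃ K : ℝ, K = N * (c - m) := ⟨_, rfl⟩
  have hcm : 0 < c - m := by linarith
  have hK : 0 < K := hKdef ▸ mul_pos hNpos hcm
  have huK : ∀ x, u x ≤ K := by
    intro x
    rw [hu]
    apply Finset.sup'_le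
    intro j hj
    have hj' : j < N := Finset.mem_range.mp hj
    have h1 := hSj_lb j x
    have hjN : (j:ℝ) ≤ N := by exact_mod_cast hj'.le
    rw [hKdef]
    nlinarith [mul_nonneg (sub_nonneg.mpr hjN) hcm.le]
  have hcN : c * (N:ℝ) = B / 2 := by
    rw [hcdef]; field_simp
  have hu_shift : ∀ x, u (shift T x) ≤ u x + (f x - c) := by
    intro x
    conv_lhs => rw [hu]
    apply Finset.sup'_le
    intro j hj
    have hj' : j < N := Finset.mem_range.mp hj
    rw [birkhoff_shift]
    have key : c * ((j:ℝ) + 1) - birkhoff T f (j+1) x ≤ u x := by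
      rcases lt_or_eq_of_le (Nat.succ_le_of_lt hj') with h | h
      · have hmem : j + 1 ∈ Finset.range N := Finset.mem_range.mpr h
        have := Finset.le_sup' (fun j : ℕ => c * (j:ℝ) - birkhoff T f j x) hmem
        rw [hu]
        push_cast at this ⊢
        linarith
      · have hSN := hevN x
        have hj1 : j + 1 = N := by omega
        rw [hj1]
        have hcast : ((j:ℝ) + 1) = (N:ℝ) := by rw [← hj1]; push_cast; ring
        rw [hcast, hcN]
        linarith [hu0 x, hB]
    linarith
  -- the new potential
  obtain ⟨g, hg⟩ : ∃ g : SigmaPlus T → ℝ, g = fun x => f x + u x - u (shift T x) := ⟨_, rfl⟩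
  have hgpos : ∀ x, c ≤ g x := by
    intro x
    have := hu_shift x
    rw [hg]
    show c ≤ f x + u x - u (shift T x)
    linarith
  have habs : ∀ x, |f x - g x| ≤ K := by
    intro x
    have h1 : f x - g x = u (shift T x) - u x := by rw [hg]; ring
    rw [h1, abs_le]
    constructor
    · linarith [hu0 (shift T x), huK x]
    · linarith [hu0 x, huK (shift T x)]
  -- Hölder continuity of u
  obtain ⟨Cu, hCudef⟩ : ∃ Cu : ℝ, Cu = ((N:ℝ) * C₀ + K) * Real.exp (α * N) := ⟨_, rfl⟩
  have hCu : 0 < Cu := by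
    rw [hCudef]
    have := hK
    positivity
  have hUH : ∀ n : ℕ, 1 ≤ n → ∀ x y : SigmaPlus T,
      (∀ i < n, x.1 i = y.1 i) → |u x - u y| ≤ Cu * Real.exp (-α * n) := by
    intro n hn x y hagree
    have hEpos : (0:ℝ) < Real.exp (-α * n) := Real.exp_pos _
    rcases lt_or_ge n N with hnN | hnN
    · have h1 : |u x - u y| ≤ K := by
        rw [abs_le]
        constructor
        · linarith [hu0 x, huK y]
        · linarith [hu0 y, huK x]
      have hnN' : (n:ℝ) ≤ N := by exact_mod_cast hnN.le
      have e2 : (1:ℝ) ≤ Real.exp (α * N) * Real.exp (-α * n) := by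
        rw [← Real.exp_add]
        apply Real.one_le_exp
        nlinarith
      have hNC : (0:ℝ) ≤ (N:ℝ) * C₀ := by positivity
      calc |u x - u y| ≤ K := h1
        _ ≤ ((N:ℝ) * C₀ + K) * (Real.exp (α * N) * Real.exp (-α * n)) := by
            nlinarith
        _ = Cu * Real.exp (-α * n) := by rw [hCudef]; ring
    · -- n ≥ N
      have hmain : ∀ j ∈ Finset.range N,
          |(c * (j:ℝ) - birkhoff T f j x) - (c * (j:ℝ) - birkhoff T f j y)|
            ≤ (N:ℝ) * C₀ * Real.exp (α * N) * Real.exp (-α * n) := by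
        intro j hj
        have hj' : j < N := Finset.mem_range.mp hj
        have hterm : ∀ i < j, |f ((shift T)^[i] x) - f ((shift T)^[i] y)|
            ≤ C₀ * Real.exp (α * N) * Real.exp (-α * n) := by
          intro i hi
          have hiN : i < N := lt_trans hi hj'
          have hin : i < n := lt_of_lt_of_le hiN hnN
          have h1 := hH (n - i) (by omega) ((shift T)^[i] x) ((shift T)^[i] y) (by
            intro k hk
            rw [shift_iter, shift_iter]
            exact hagree (k + i) (by omega))
          have hcast : ((n - i : ℕ) : ℝ) = (n:ℝ) - (i:ℝ) := by
            push_cast [Nat.cast_sub hin.le]; ring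
          rw [hcast] at h1
          refine le_trans h1 ?_
          rw [mul_assoc, ← Real.exp_add]
          apply mul_le_mul_of_nonneg_left _ hC₀.le
          apply Real.exp_le_exp.mpr
          have hiN' : (i:ℝ) ≤ N := by exact_mod_cast hiN.le
          nlinarith
        have hsum1 : |birkhoff T f j x - birkhoff T f j y|
            ≤ (j:ℝ) * (C₀ * Real.exp (α * N) * Real.exp (-α * n)) := by
          rw [birkhoff, birkhoff, ← Finset.sum_sub_distrib]
          refine le_trans (Finset.abs_sum_le_sum_abs _ _) ?_
          calc ∑ i ∈ Finset.range j, |f ((shift T)^[i] x) - f ((shift T)^[i] y)|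
              ≤ ∑ _i ∈ Finset.range j, C₀ * Real.exp (α * N) * Real.exp (-α * n) :=
                Finset.sum_le_sum fun i hi => hterm i (Finset.mem_range.mp hi)
            _ = (j:ℝ) * (C₀ * Real.exp (α * N) * Real.exp (-α * n)) := by
                simp [Finset.sum_const, nsmul_eq_mul]
        have hjN : (j:ℝ) ≤ N := by exact_mod_cast hj'.le
        have : |(c * (j:ℝ) - birkhoff T f j x) - (c * (j:ℝ) - birkhoff T f j y)|
            = |birkhoff T f j x - birkhoff T f j y| := by
          rw [show (c * (j:ℝ) - birkhoff T f j x) - (c * (j:ℝ) - birkhoff T f j y)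
              = -(birkhoff T f j x - birkhoff T f j y) by ring, abs_neg]
        rw [this]
        refine le_trans hsum1 ?_
        have hpos : (0:ℝ) ≤ C₀ * Real.exp (α * N) * Real.exp (-α * n) := by positivity
        nlinarith
      have := abs_sup'_sub_sup'_le hne
        (fun j : ℕ => c * (j:ℝ) - birkhoff T f j x)
        (fun j : ℕ => c * (j:ℝ) - birkhoff T f j y)
        ((N:ℝ) * C₀ * Real.exp (α * N) * Real.exp (-α * n)) hmain
      rw [hu]
      refine le_trans this ?_
      rw [hCudef]
      have h1 : (N:ℝ) * C₀ ≤ (N:ℝ) * C₀ + K := by linarith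
      exact mul_le_mul_of_nonneg_right
        (mul_le_mul_of_nonneg_right h1 (Real.exp_pos _).le) (Real.exp_pos _).le
  -- Hölder continuity of g
  obtain ⟨Cg, hCgdef⟩ : ∃ Cg : ℝ, Cg = C₀ + Cu + (Cu + K) * Real.exp α := ⟨_, rfl⟩
  have hCg : 0 < Cg := by
    rw [hCgdef]
    have := hK
    have := hCu
    positivity
  have hGH : ∀ n : ℕ, 1 ≤ n → ∀ x y : SigmaPlus T,
      (∀ i < n, x.1 i = y.1 i) → |g x - g y| ≤ Cg * Real.exp (-α * n) := by
    intro n hn x y hagree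
    have h1 := hH n hn x y hagree
    have h2 := hUH n hn x y hagree
    have h3 : |u (shift T x) - u (shift T y)| ≤ (Cu + K) * Real.exp α * Real.exp (-α * n) := by
      rcases eq_or_lt_of_le hn with h | h
    -- n = 1 or n ≥ 2
      · have hn1 : n = 1 := h.symm
        subst hn1
        have hb : |u (shift T x) - u (shift T y)| ≤ K := by
          rw [abs_le]
          constructor
          · linarith [hu0 (shift T x), huK (shift T y)]
          · linarith [hu0 (shift T y), huK (shift T x)]
        have : Real.exp α * Real.exp (-α * (1:ℕ)) = 1 := by
          rw [← Real.exp_add]; norm_num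
        rw [mul_assoc, this, mul_one]
        linarith [hCu.le]
      · have hagree' : ∀ i < n - 1, (shift T x).1 i = (shift T y).1 i := by
          intro i hi
          exact hagree (i + 1) (by omega)
        have h3' := hUH (n - 1) (by omega) (shift T x) (shift T y) hagree'
        have hcast : ((n - 1 : ℕ) : ℝ) = (n:ℝ) - 1 := by
          push_cast [Nat.cast_sub (by omega : 1 ≤ n)]; ring
        rw [hcast] at h3'
        have heq : Real.exp (-α * ((n:ℝ) - 1)) = Real.exp α * Real.exp (-α * n) := by
          rw [← Real.exp_add]; congr 1; ring
        rw [heq] at h3'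
        have hassoc : (Cu + K) * Real.exp α * Real.exp (-α * n)
            = (Cu + K) * (Real.exp α * Real.exp (-α * n)) := by ring
        have hmono : Cu * (Real.exp α * Real.exp (-α * n))
            ≤ (Cu + K) * (Real.exp α * Real.exp (-α * n)) :=
          mul_le_mul_of_nonneg_right (by linarith) (by positivity)
        rw [hassoc]
        linarith
    have hd : g x - g y = (f x - f y) + (u x - u y) - (u (shift T x) - u (shift T y)) := by
      rw [hg]; ring
    have e1 := abs_le.mp h1
    have e2 := abs_le.mp h2
    have e3 := abs_le.mp h3
    have hexp : Cg * Real.exp (-α * n)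
        = C₀ * Real.exp (-α * n) + Cu * Real.exp (-α * n)
          + (Cu + K) * Real.exp α * Real.exp (-α * n) := by
      rw [hCgdef]; ring
    rw [hd, abs_le, hexp]
    constructor
    · linarith [e1.1, e2.1, e3.2]
    · linarith [e1.2, e2.2, e3.1]
  have hgH : LocHolder T g := ⟨Cg, hCg, α, hα, hGH⟩
  -- cohomology over periodic points
  have hper : ∀ r : ℕ, 1 ≤ r → ∀ x ∈ Mfix T r, birkhoff T f r x = birkhoff T g r x := by
    intro r _ x hx
    have hfix : (shift T)^[r] x = x := hx
    have := birkhoff_cocycle T f u r x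
    rw [hfix] at this
    rw [hg, this]
    ring
  -- equality of critical exponents
  have hfle : ∀ x, f x ≤ g x + K := by
    intro x
    have := abs_le.mp (habs x)
    linarith [this.2]
  have hgle : ∀ x, g x ≤ f x + K := by
    intro x
    have := abs_le.mp (habs x)
    linarith [this.1]
  have h1 : ∀ a : A, Ssup T g a ≤ Ssup T f a + K := Ssup_le_add hhold hK.le hgle
  have h2 : ∀ a : A, Ssup T f a ≤ Ssup T g a + K := Ssup_le_add hgH hK.le hfle
  have hconv : convSet T f = convSet T g := by
    ext t
    simp only [convSet, Set.mem_setOf_eq]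
    constructor
    · rintro ⟨ht, hsum'⟩
      refine ⟨ht, ?_⟩
      refine Summable.of_nonneg_of_le (fun a => (Real.exp_pos _).le) (fun a => ?_)
        (hsum'.mul_left (Real.exp (t * K)))
      rw [← Real.exp_add]
      apply Real.exp_le_exp.mpr
      have := mul_le_mul_of_nonneg_left (h2 a) ht.le
      rw [mul_add] at this
      linarith
    · rintro ⟨ht, hsum'⟩
      refine ⟨ht, ?_⟩
      refine Summable.of_nonneg_of_le (fun a => (Real.exp_pos _).le) (fun a => ?_)
        (hsum'.mul_left (Real.exp (t * K)))
      rw [← Real.exp_add]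
      apply Real.exp_le_exp.mpr
      have := mul_le_mul_of_nonneg_left (h1 a) ht.le
      rw [mul_add] at this
      linarith
  refine ⟨g, K, hK, hgH, ⟨c, hc, hgpos⟩, habs, hper, ?_⟩
  rw [dcrit, dcrit, hconv]

end CMS
end

section
/- Suppose (Σ⁺, σ) is a one-sided countable Markov shift and f : Σ⁺ → ℝ is locally Hölder continuous. Then there is a sequence ε_k → 0 (depending only on the Hölder constants of f) with the following property: for every k ∈ ℕ, every nonempty k-cylinder p ∈ Λ_k, every non-periodic point z_p ∈ p, and every n ≥ k, the map Ψ_p^n sending x ∈ Fix^n ∩ p to the concatenation x₁⋯x_n z_p (the point y with y_i = x_i for i ≤ n and σ^n(y) = z_p) is a well-defined bijection from Fix^n ∩ p onto σ^{−n}(z_p) ∩ p, and |S_n f(x) − S_n f(Ψ_p^n(x))| ≤ ε_k for every x ∈ Fix^n ∩ p. -/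
open scoped ENNReal NNReal
open Filter MeasureTheory Set

namespace CMS

variable {A : Type*}

/-!
A point `x` of period `n` in the cylinder `[w]` is determined by its first `n` letters, and
`x_n = x_0 = w_0 = z_0`, so these letters may be followed by `z`. Conversely a preimage `y` of `z`
in `[w]` has `y_n = z_0 = y_0`, so its first `n` letters repeat to a point of period `n`. Since `z`
starts with `w` and `x_{n+i} = w_i` for `i < k`, the concatenation agrees with `x` on `n + k`
letters, and local Hölder continuity bounds the difference of the Birkhoff sums by a geometric
series `C (r^{k+1} + r^{k+2} + ⋯) = ε_k`.
-/

section

variable {T : A → A → Prop}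

lemma shift_iterate_apply (m : ℕ) (x : SigmaPlus T) (i : ℕ) :
    ((shift T)^[m] x).1 i = x.1 (i + m) := by
  induction m generalizing x with
  | zero => rfl
  | succ m ih =>
    rw [Function.iterate_succ_apply, ih]
    rfl

lemma apply_add_of_shift_iterate_eq {n : ℕ} {y z : SigmaPlus T}
    (hy : (shift T)^[n] y = z) (i : ℕ) : y.1 (i + n) = z.1 i := by
  rw [← shift_iterate_apply, hy]

lemma apply_eq_of_shift_iterate_eq {n : ℕ} {y z : SigmaPlus T}
    (hy : (shift T)^[n] y = z) : y.1 n = z.1 0 := by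
  simpa using apply_add_of_shift_iterate_eq hy 0

lemma apply_mod_of_mem_Mfix {n : ℕ} {x : SigmaPlus T} (hx : x ∈ Mfix T n) (i : ℕ) :
    x.1 (i % n) = x.1 i := by
  simpa [shift_iterate_apply] using
    congrArg (fun y : SigmaPlus T => y.1 0) (Function.IsPeriodicPt.iterate_mod_apply hx i)

lemma apply_zero_eq_of_mem_cylinder {k : ℕ} (hk : 1 ≤ k) {w : Fin k → A} {x y : SigmaPlus T}
    (hx : x ∈ cylinder T w) (hy : y ∈ cylinder T w) : x.1 0 = y.1 0 :=
  (hx ⟨0, hk⟩).trans (hy ⟨0, hk⟩).symm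

lemma mem_cylinder_of_agree {k : ℕ} {w : Fin k → A} {x y : SigmaPlus T}
    (hx : x ∈ cylinder T w) (hxy : ∀ i < k, y.1 i = x.1 i) : y ∈ cylinder T w :=
  fun i => (hxy i i.2).trans (hx i)

lemma shift_iterate_agree {m : ℕ} {x y : SigmaPlus T} (hxy : ∀ i < m, x.1 i = y.1 i)
    (j : ℕ) : ∀ i < m - j, ((shift T)^[j] x).1 i = ((shift T)^[j] y).1 i := by
  intro i hi
  rw [shift_iterate_apply, shift_iterate_apply]
  exact hxy _ (by omega)

/-- The point `x₀ ⋯ x_{n-1} z₀ z₁ ⋯`, admissible because `x_{n-1} → x_n = z₀`. -/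
def concat (n : ℕ) (x z : SigmaPlus T) (h : x.1 n = z.1 0) : SigmaPlus T :=
  ⟨fun i => if i < n then x.1 i else z.1 (i - n), by
    intro i
    rcases lt_trichotomy (i + 1) n with hi | hi | hi
    · simpa [hi, show i < n by omega] using x.2 i
    · obtain rfl := hi
      simpa [← h] using x.2 i
    · simpa [show ¬ i < n by omega, show ¬ i + 1 < n by omega,
        show i + 1 - n = i - n + 1 by omega] using z.2 (i - n)⟩

lemma concat_apply_of_lt {n : ℕ} {x z : SigmaPlus T} (h : x.1 n = z.1 0) {i : ℕ}
    (hi : i < n) : (concat n x z h).1 i = x.1 i :=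
  if_pos hi

lemma concat_apply_of_le {n : ℕ} {x z : SigmaPlus T} (h : x.1 n = z.1 0) {i : ℕ}
    (hi : n ≤ i) : (concat n x z h).1 i = z.1 (i - n) :=
  if_neg (by omega)

lemma shift_iterate_concat {n : ℕ} {x z : SigmaPlus T} (h : x.1 n = z.1 0) :
    (shift T)^[n] (concat n x z h) = z := by
  ext i
  rw [shift_iterate_apply, concat_apply_of_le h (by omega), Nat.add_sub_cancel]

lemma concat_eq_of_agree {n : ℕ} {x y z : SigmaPlus T} (h : x.1 n = z.1 0)
    (hxy : ∀ i < n, x.1 i = y.1 i) (hy : (shift T)^[n] y = z) : concat n x z h = y := by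
  ext i
  rcases lt_or_ge i n with hi | hi
  · rw [concat_apply_of_lt h hi, hxy i hi]
  · rw [concat_apply_of_le h hi, ← hy, shift_iterate_apply, Nat.sub_add_cancel hi]

/-- The periodic point `(y₀ ⋯ y_{n-1})^∞`, admissible because `y_{n-1} → y_n = y₀`. -/
def periodize (n : ℕ) (y : SigmaPlus T) (h : y.1 n = y.1 0) : SigmaPlus T :=
  ⟨fun i => y.1 (i % n), by
    intro i
    rcases Nat.eq_zero_or_pos n with rfl | hn
    · simpa using y.2 i
    have hmod : y.1 ((i + 1) % n) = y.1 (i % n + 1) := by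
      rw [← Nat.mod_add_mod]
      rcases Nat.lt_or_ge (i % n + 1) n with hi | hi
      · rw [Nat.mod_eq_of_lt hi]
      · rw [show i % n + 1 = n by have := Nat.mod_lt i hn; omega, Nat.mod_self, h]
    simpa [hmod] using y.2 (i % n)⟩

lemma periodize_mem_Mfix (n : ℕ) (y : SigmaPlus T) (h : y.1 n = y.1 0) :
    periodize n y h ∈ Mfix T n := by
  ext i
  simp only [shift_iterate_apply, periodize, Nat.add_mod_right]

lemma periodize_apply_of_lt {n : ℕ} {y : SigmaPlus T} (h : y.1 n = y.1 0) {i : ℕ}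
    (hi : i < n) : (periodize n y h).1 i = y.1 i :=
  congrArg y.1 (Nat.mod_eq_of_lt hi)

def fixCylinderEquivPreimage {k n : ℕ} (hk : 1 ≤ k) (hkn : k ≤ n) (w : Fin k → A)
    (z : SigmaPlus T) (hz : z ∈ cylinder T w) :
    {x : SigmaPlus T // x ∈ Mfix T n ∧ x ∈ cylinder T w} ≃
      {y : SigmaPlus T // (shift T)^[n] y = z ∧ y ∈ cylinder T w} where
  toFun x :=
    ⟨concat n x.1 z
        ((apply_eq_of_shift_iterate_eq x.2.1).trans (apply_zero_eq_of_mem_cylinder hk x.2.2 hz)),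
      shift_iterate_concat _,
      mem_cylinder_of_agree x.2.2 fun _ hi => concat_apply_of_lt _ (by omega)⟩
  invFun y :=
    ⟨periodize n y.1
        ((apply_eq_of_shift_iterate_eq y.2.1).trans (apply_zero_eq_of_mem_cylinder hk hz y.2.2)),
      periodize_mem_Mfix n y.1 _,
      mem_cylinder_of_agree y.2.2 fun _ hi => periodize_apply_of_lt _ (by omega)⟩
  left_inv x := by
    apply Subtype.ext
    ext i
    dsimp only [periodize]
    rw [concat_apply_of_lt _ (Nat.mod_lt i (by omega)), apply_mod_of_mem_Mfix x.2.1]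
  right_inv y := by
    apply Subtype.ext
    dsimp only
    exact concat_eq_of_agree _ (fun i hi => periodize_apply_of_lt _ hi) y.2.1

lemma fixCylinderEquivPreimage_apply_agree {k n : ℕ} (hk : 1 ≤ k) (hkn : k ≤ n)
    (w : Fin k → A) (z : SigmaPlus T) (hz : z ∈ cylinder T w)
    (x : {x : SigmaPlus T // x ∈ Mfix T n ∧ x ∈ cylinder T w}) :
    ∀ i < n + k, (fixCylinderEquivPreimage hk hkn w z hz x).1.1 i = x.1.1 i := by
  intro i hi
  dsimp only [fixCylinderEquivPreimage, Equiv.coe_fn_mk]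
  rcases lt_or_ge i n with hin | hin
  · exact concat_apply_of_lt _ hin
  · rw [concat_apply_of_le _ hin, hz ⟨i - n, by omega⟩, ← x.2.2 ⟨i - n, by omega⟩,
      ← apply_add_of_shift_iterate_eq x.2.1, Nat.sub_add_cancel hin]

lemma LocHolder.exists_geometric_bound {f : SigmaPlus T → ℝ} (hf : LocHolder T f) :
    ∃ C ≥ (0 : ℝ), ∃ r : ℝ, 0 ≤ r ∧ r < 1 ∧ ∀ m : ℕ, 1 ≤ m → ∀ x y : SigmaPlus T,
      (∀ i < m, x.1 i = y.1 i) → |f x - f y| ≤ C * r ^ m := by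
  obtain ⟨C, hC, α, hα, hf⟩ := hf
  refine ⟨C, hC.le, Real.exp (-α), (Real.exp_pos _).le, Real.exp_lt_one_iff.mpr (by linarith),
    fun m hm x y hxy => ?_⟩
  rw [← Real.exp_nat_mul, mul_comm (m : ℝ)]
  exact hf m hm x y hxy

/-- The `i`-th terms of the two sums are evaluated at points agreeing on `n + k - i` letters. -/
lemma abs_birkhoff_sub_le_of_agree {f : SigmaPlus T → ℝ} {C r : ℝ} (hC : 0 ≤ C) (hr0 : 0 ≤ r)
    (hr1 : r < 1) (hf : ∀ m : ℕ, 1 ≤ m → ∀ x y : SigmaPlus T,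
      (∀ i < m, x.1 i = y.1 i) → |f x - f y| ≤ C * r ^ m)
    {n k : ℕ} {x y : SigmaPlus T} (hxy : ∀ i < n + k, x.1 i = y.1 i) :
    |birkhoff T f n x - birkhoff T f n y| ≤ C * r ^ (k + 1) / (1 - r) := by
  have hterm : ∀ i ∈ Finset.range n,
      |f ((shift T)^[i] x) - f ((shift T)^[i] y)| ≤ C * r ^ (k + 1 + (n - 1 - i)) := by
    intro i hi
    have hi : i < n := Finset.mem_range.mp hi
    rw [show k + 1 + (n - 1 - i) = n + k - i by omega]
    exact hf _ (by omega) _ _ (shift_iterate_agree hxy i)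
  have hgeom : ∑ i ∈ Finset.range n, r ^ (k + 1 + (n - 1 - i)) ≤ r ^ (k + 1) / (1 - r) := by
    have hIco := Finset.sum_Ico_eq_sum_range (fun j => r ^ j) (k + 1) (k + 1 + n)
    rw [Nat.add_sub_cancel_left] at hIco
    rw [Finset.sum_range_reflect (fun j => r ^ (k + 1 + j)), ← hIco]
    exact geom_sum_Ico_le_of_lt_one hr0 hr1
  calc |birkhoff T f n x - birkhoff T f n y|
      = |∑ i ∈ Finset.range n, (f ((shift T)^[i] x) - f ((shift T)^[i] y))| := by
        rw [birkhoff, birkhoff, Finset.sum_sub_distrib]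
    _ ≤ ∑ i ∈ Finset.range n, |f ((shift T)^[i] x) - f ((shift T)^[i] y)| :=
        Finset.abs_sum_le_sum_abs _ _
    _ ≤ ∑ i ∈ Finset.range n, C * r ^ (k + 1 + (n - 1 - i)) := Finset.sum_le_sum hterm
    _ ≤ C * r ^ (k + 1) / (1 - r) := by
        rw [← Finset.mul_sum, mul_div_assoc]
        exact mul_le_mul_of_nonneg_left hgeom hC

end

theorem fixed_points_preimages_bijection_general
    {A : Type*} (T : A → A → Prop)
    (f : SigmaPlus T → ℝ)
    (hhold : LocHolder T f) :
    ∃ ε : ℕ → ℝ, Tendsto ε atTop (nhds (0 : ℝ)) ∧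
      ∀ (k : ℕ), 1 ≤ k → ∀ (w : Fin k → A) (z : SigmaPlus T),
        z ∈ cylinder T w →
        (∀ m : ℕ, 1 ≤ m → (shift T)^[m] z ≠ z) →
        ∀ n : ℕ, k ≤ n →
          ∃ Ψ : {x : SigmaPlus T // x ∈ Mfix T n ∧ x ∈ cylinder T w} →
                {y : SigmaPlus T // (shift T)^[n] y = z ∧ y ∈ cylinder T w},
            Function.Bijective Ψ ∧
            ∀ x : {x : SigmaPlus T // x ∈ Mfix T n ∧ x ∈ cylinder T w},
              (∀ i < n, (Ψ x).1.1 i = x.1.1 i) ∧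
              |birkhoff T f n x.1 - birkhoff T f n (Ψ x).1| ≤ ε k := by
  obtain ⟨C, hC, r, hr0, hr1, hf⟩ := hhold.exists_geometric_bound
  refine ⟨fun k => C * r ^ (k + 1) / (1 - r), ?_, ?_⟩
  · simpa using (((tendsto_pow_atTop_nhds_zero_of_lt_one hr0 hr1).comp
      (tendsto_add_atTop_nat 1)).const_mul C).div_const (1 - r)
  intro k hk w z hz _ n hkn
  let Ψ := fixCylinderEquivPreimage hk hkn w z hz
  have hagree := fixCylinderEquivPreimage_apply_agree hk hkn w z hz
  refine ⟨Ψ, Ψ.bijective, fun x => ⟨fun i hi => hagree x i (by omega), ?_⟩⟩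
  exact abs_birkhoff_sub_le_of_agree hC hr0 hr1 hf fun i hi => (hagree x i hi).symm

/-- Replacing periodic points by preimages of a sample point: for every
nonempty `k`-cylinder with a non-periodic sample point `z` and every `n ≥ k`,
concatenation gives a bijection `Fix^n ∩ p → σ^{-n}(z) ∩ p` which changes
Birkhoff sums by at most `ε_k`, where `ε_k → 0`. -/
theorem fixed_points_preimages_bijection
    {A : Type*} [Countable A] (T : A → A → Prop)
    (f : SigmaPlus T → ℝ)
    (hhold : LocHolder T f) :
    ∃ ε : ℕ → ℝ, Tendsto ε atTop (nhds (0 : ℝ)) ∧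
      ∀ (k : ℕ), 1 ≤ k → ∀ (w : Fin k → A) (z : SigmaPlus T),
        z ∈ cylinder T w →
        (∀ m : ℕ, 1 ≤ m → (shift T)^[m] z ≠ z) →
        ∀ n : ℕ, k ≤ n →
          ∃ Ψ : {x : SigmaPlus T // x ∈ Mfix T n ∧ x ∈ cylinder T w} →
                {y : SigmaPlus T // (shift T)^[n] y = z ∧ y ∈ cylinder T w},
            Function.Bijective Ψ ∧
            ∀ x : {x : SigmaPlus T // x ∈ Mfix T n ∧ x ∈ cylinder T w},
              (∀ i < n, (Ψ x).1.1 i = x.1.1 i) ∧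
              |birkhoff T f n x.1 - birkhoff T f n (Ψ x).1| ≤ ε k :=
  fixed_points_preimages_bijection_general T f hhold

end CMS
end
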